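/- Let M be an η-normal almost contact metric manifold with autoparallel Reeb vector field. The set of parallelizations on M (linear connections ∇̃ with ∇̃φ = 0, ∇̃ξ = 0, ∇̃η = 0, ∇̃g = 0) is nonempty and carries a natural structure of an affine space modeled on the vector space of (1,2)-tensor fields T satisfying T_X(φY) = φ(T_X Y), T_X ξ = 0, and g(T_X Y, Z) + g(Y, T_X Z) = 0 for all vector fields X, Y, Z: the difference of any two parallelizations is such a tensor field, and adding such a tensor field to a parallelization yields a parallelization. -/
import Mathlib


noncomputable section

/-!
An abstract model of smooth geometry: `F` plays the role of the algebra of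
smooth real-valued functions on a manifold `M`, `V` plays the role of the
`C^∞(M)`-module of smooth vector fields on `M` (with its Lie bracket), and
`D X f` represents the directional derivative of the function `f` along the
vector field `X`.
-/
structure SmoothSetting (F V : Type*) [CommRing F] [Algebra ℝ F]
    [LieRing V] [Module F V] [Module ℝ V] [IsScalarTower ℝ F V] where
  D : V → F → F
  D_add : ∀ (X : V) (f g : F), D X (f + g) = D X f + D X g
  D_mul : ∀ (X : V) (f g : F), D X (f * g) = f * D X g + g * D X f
  D_addX : ∀ (X Y : V) (f : F), D (X + Y) f = D X f + D Y f
  D_smulX : ∀ (f : F) (X : V) (k : F), D (f • X) k = f * D X k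
  D_bracket : ∀ (X Y : V) (f : F), D ⁅X, Y⁆ f = D X (D Y f) - D Y (D X f)
  bracket_smul : ∀ (f : F) (X Y : V), ⁅X, f • Y⁆ = f • ⁅X, Y⁆ + D X f • Y

/-- An almost contact metric manifold, modelled abstractly: a quadruple
`(φ, ξ, η, g)` where `φ` is a `(1,1)`-tensor field, `ξ` a vector field, `η` a
one-form and `g` a Riemannian metric, satisfying `φ² = -Id + η ⊗ ξ`,
`η(ξ) = 1` and `g(φX, φY) = g(X,Y) - η(X)η(Y)`, together with the Levi-Civita
connection `nabla` of `g` (characterised by metricity and torsion-freeness). -/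
structure ACMS (F V : Type*) [CommRing F] [PartialOrder F] [Algebra ℝ F]
    [LieRing V] [Module F V] [Module ℝ V] [IsScalarTower ℝ F V]
    extends SmoothSetting F V where
  phi : V → V
  xi : V
  eta : V → F
  g : V → V → F
  phi_add : ∀ X Y : V, phi (X + Y) = phi X + phi Y
  phi_smul : ∀ (f : F) (X : V), phi (f • X) = f • phi X
  eta_add : ∀ X Y : V, eta (X + Y) = eta X + eta Y
  eta_smul : ∀ (f : F) (X : V), eta (f • X) = f * eta X
  g_addX : ∀ X Y Z : V, g (X + Y) Z = g X Z + g Y Z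
  g_smulX : ∀ (f : F) (X Y : V), g (f • X) Y = f * g X Y
  g_symm : ∀ X Y : V, g X Y = g Y X
  g_nondeg : ∀ X : V, (∀ Y : V, g X Y = 0) → X = 0
  g_pos : ∀ X : V, 0 ≤ g X X
  phi_phi : ∀ X : V, phi (phi X) = -X + eta X • xi
  eta_xi : eta xi = 1
  phi_xi : phi xi = 0
  eta_phi : ∀ X : V, eta (phi X) = 0
  g_phi_phi : ∀ X Y : V, g (phi X) (phi Y) = g X Y - eta X * eta Y
  nabla : V → V → V
  nabla_addX : ∀ X Y Z : V, nabla (X + Y) Z = nabla X Z + nabla Y Z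
  nabla_smulX : ∀ (f : F) (X Y : V), nabla (f • X) Y = f • nabla X Y
  nabla_addY : ∀ X Y Z : V, nabla X (Y + Z) = nabla X Y + nabla X Z
  nabla_leibniz : ∀ (X : V) (f : F) (Y : V),
    nabla X (f • Y) = D X f • Y + f • nabla X Y
  nabla_torsion_free : ∀ X Y : V, nabla X Y - nabla Y X = ⁅X, Y⁆
  nabla_metric : ∀ X Y Z : V,
    D X (g Y Z) = g (nabla X Y) Z + g Y (nabla X Z)

namespace ACMS

variable {F V : Type*} [CommRing F] [PartialOrder F] [Algebra ℝ F]
  [LieRing V] [Module F V] [Module ℝ V] [IsScalarTower ℝ F V]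
variable (A : ACMS F V)

/-- The fundamental form `Φ(X,Y) = g(X, φY)`. -/
def Phi (X Y : V) : F := A.g X (A.phi Y)

/-- The exterior derivative `dη`, via the coboundary formula
`2 dη(X,Y) = X η(Y) - Y η(X) - η([X,Y])`. -/
def dEta (X Y : V) : F :=
  ((1:ℝ)/2) • (A.D X (A.eta Y) - A.D Y (A.eta X) - A.eta ⁅X, Y⁆)

/-- The exterior derivative `dΦ`, via the coboundary formula. -/
def dPhi (X Y Z : V) : F :=
  ((1:ℝ)/3) • (A.D X (A.Phi Y Z) + A.D Y (A.Phi Z X) + A.D Z (A.Phi X Y)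
    - A.Phi ⁅X, Y⁆ Z - A.Phi ⁅Y, Z⁆ X - A.Phi ⁅Z, X⁆ Y)

/-- The Lie derivative `(L_ξ η)(X)`. -/
def lieEta (X : V) : F := A.D A.xi (A.eta X) - A.eta ⁅A.xi, X⁆

/-- The Lie derivative `(L_ξ g)(X,Y)`. -/
def lieG (X Y : V) : F :=
  A.D A.xi (A.g X Y) - A.g ⁅A.xi, X⁆ Y - A.g X ⁅A.xi, Y⁆

/-- The Lie derivative `(L_ξ Φ)(X,Y)`. -/
def liePhiForm (X Y : V) : F :=
  A.D A.xi (A.Phi X Y) - A.Phi ⁅A.xi, X⁆ Y - A.Phi X ⁅A.xi, Y⁆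

/-- The Lie derivative `(L_ξ φ)(X)`. -/
def liePhi (X : V) : V := ⁅A.xi, A.phi X⁆ - A.phi ⁅A.xi, X⁆

/-- The tensor field `h = (1/2) L_ξ φ`. -/
def h (X : V) : V := ((1:ℝ)/2) • A.liePhi X

/-- The Nijenhuis torsion `[φ,φ](X,Y)`. -/
def nijPhi (X Y : V) : V :=
  A.phi (A.phi ⁅X, Y⁆) + ⁅A.phi X, A.phi Y⁆
    - A.phi ⁅A.phi X, Y⁆ - A.phi ⁅X, A.phi Y⁆

/-- The tensor `N⁽¹⁾(X,Y) = [φ,φ](X,Y) + 2 dη(X,Y) ξ`. -/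
def N1 (X Y : V) : V := A.nijPhi X Y + (2 * A.dEta X Y) • A.xi

/-- The tensor `N⁽²⁾(X,Y) = (L_{φX} η)(Y) - (L_{φY} η)(X)`. -/
def N2 (X Y : V) : F :=
  (A.D (A.phi X) (A.eta Y) - A.eta ⁅A.phi X, Y⁆)
    - (A.D (A.phi Y) (A.eta X) - A.eta ⁅A.phi Y, X⁆)

/-- The covariant derivative `(∇_X φ)(Y)`. -/
def covPhi (X Y : V) : V := A.nabla X (A.phi Y) - A.phi (A.nabla X Y)

/-- The covariant derivative `(∇_X η)(Y)`. -/
def covEta (X Y : V) : F := A.D X (A.eta Y) - A.eta (A.nabla X Y)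

/-- `M` is `η`-normal: `N⁽¹⁾(X,Y) = 0` whenever `η(X) = η(Y) = 0`. -/
def EtaNormal : Prop := ∀ X Y : V, A.eta X = 0 → A.eta Y = 0 → A.N1 X Y = 0

/-- `M` is normal: `N⁽¹⁾ = 0` identically. -/
def Normal : Prop := ∀ X Y : V, A.N1 X Y = 0

/-- `M` is a CR-manifold: for all `X, Y` with `η(X) = η(Y) = 0` there is `Z`
with `η(Z) = 0` and `[X - iφX, Y - iφY] = Z - iφZ` (stated here via its real
and imaginary parts). -/
def IsCR : Prop := ∀ X Y : V, A.eta X = 0 → A.eta Y = 0 →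
  ∃ Z : V, A.eta Z = 0 ∧ ⁅X, Y⁆ - ⁅A.phi X, A.phi Y⁆ = Z ∧
    ⁅A.phi X, Y⁆ + ⁅X, A.phi Y⁆ = A.phi Z

/-- `Dc` is a linear connection on `M`. -/
def IsConnection (Dc : V → V → V) : Prop :=
  (∀ X Y Z : V, Dc (X + Y) Z = Dc X Z + Dc Y Z) ∧
  (∀ (f : F) (X Y : V), Dc (f • X) Y = f • Dc X Y) ∧
  (∀ X Y Z : V, Dc X (Y + Z) = Dc X Y + Dc X Z) ∧
  (∀ (X : V) (f : F) (Y : V), Dc X (f • Y) = A.D X f • Y + f • Dc X Y)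

/-- `Dc` is a parallelization: a linear connection making the whole almost
contact metric structure parallel, `∇̃φ = 0`, `∇̃ξ = 0`, `∇̃η = 0`, `∇̃g = 0`. -/
def IsParallelization (Dc : V → V → V) : Prop :=
  A.IsConnection Dc ∧
  (∀ X Y : V, Dc X (A.phi Y) = A.phi (Dc X Y)) ∧
  (∀ X : V, Dc X A.xi = 0) ∧
  (∀ X Y : V, A.D X (A.eta Y) = A.eta (Dc X Y)) ∧
  (∀ X Y Z : V, A.D X (A.g Y Z) = A.g (Dc X Y) Z + A.g Y (Dc X Z))

end ACMS

/-- A `(1,2)`-tensor field `T` with `T_X(φY) = φ(T_X Y)`, `T_X ξ = 0` and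
`g(T_X Y, Z) + g(Y, T_X Z) = 0`. -/
def ACMS.IsAdmissibleTensor
    {F V : Type*} [CommRing F] [PartialOrder F] [Algebra ℝ F]
    [LieRing V] [Module F V] [Module ℝ V] [IsScalarTower ℝ F V]
    (A : ACMS F V) (T : V → V → V) : Prop :=
  (∀ X Y Z : V, T (X + Y) Z = T X Z + T Y Z) ∧
  (∀ (f : F) (X Y : V), T (f • X) Y = f • T X Y) ∧
  (∀ X Y Z : V, T X (Y + Z) = T X Y + T X Z) ∧
  (∀ (X : V) (f : F) (Y : V), T X (f • Y) = f • T X Y) ∧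
  (∀ X Y : V, T X (A.phi Y) = A.phi (T X Y)) ∧
  (∀ X : V, T X A.xi = 0) ∧
  (∀ X Y Z : V, A.g (T X Y) Z + A.g Y (T X Z) = 0)

section Aux

namespace ACMS

variable {F V : Type*} [CommRing F] [PartialOrder F] [Algebra ℝ F]
  [LieRing V] [Module F V] [Module ℝ V] [IsScalarTower ℝ F V]
variable (A : ACMS F V)

/-- The element `1/2` of `F`. -/
noncomputable def hlf : F := algebraMap ℝ F (1/2 : ℝ)

lemma hlf_add : (hlf : F) + hlf = 1 := by
  rw [hlf, ← map_add]; norm_num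

lemma hlf_mul_two : (hlf : F) * 2 = 1 := by
  have h2 : ((2:F)) = algebraMap ℝ F (2:ℝ) := by rw [map_ofNat]
  rw [hlf, h2, ← map_mul]; norm_num

lemma D_zero' (X : V) : A.D X (0 : F) = 0 := by
  have h := A.D_add X 0 0
  rw [zero_add] at h
  exact (left_eq_add.mp h)

lemma D_one' (X : V) : A.D X (1 : F) = 0 := by
  have h := A.D_mul X 1 1
  rw [mul_one, one_mul] at h
  exact (left_eq_add.mp h)

lemma D_neg' (X : V) (f : F) : A.D X (-f) = -(A.D X f) := by
  have h := A.D_add X f (-f)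
  rw [add_neg_cancel, A.D_zero'] at h
  linear_combination -h

lemma g_zeroX (Y : V) : A.g 0 Y = 0 := by
  have h := A.g_smulX 0 0 Y
  simpa using h

lemma g_zeroY (X : V) : A.g X 0 = 0 := by
  rw [A.g_symm, A.g_zeroX]

lemma g_negX (X Y : V) : A.g (-X) Y = -(A.g X Y) := by
  have h := A.g_smulX (-1) X Y
  simpa using h

lemma g_subX (X Y Z : V) : A.g (X - Y) Z = A.g X Z - A.g Y Z := by
  rw [sub_eq_add_neg, A.g_addX, A.g_negX, sub_eq_add_neg]

lemma g_addY (X Y Z : V) : A.g X (Y + Z) = A.g X Y + A.g X Z := by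
  rw [A.g_symm, A.g_addX, A.g_symm Y, A.g_symm Z]

lemma g_smulY (f : F) (X Y : V) : A.g X (f • Y) = f * A.g X Y := by
  rw [A.g_symm, A.g_smulX, A.g_symm]

lemma g_negY (X Y : V) : A.g X (-Y) = -(A.g X Y) := by
  rw [A.g_symm, A.g_negX, A.g_symm]

lemma g_subY (X Y Z : V) : A.g X (Y - Z) = A.g X Y - A.g X Z := by
  rw [A.g_symm, A.g_subX, A.g_symm Y, A.g_symm Z]

lemma phi_zero : A.phi (0 : V) = 0 := by
  have h := A.phi_smul 0 0
  simpa using h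

lemma phi_neg (X : V) : A.phi (-X) = -(A.phi X) := by
  have h := A.phi_smul (-1) X
  simpa using h

lemma phi_sub (X Y : V) : A.phi (X - Y) = A.phi X - A.phi Y := by
  rw [sub_eq_add_neg, A.phi_add, A.phi_neg, sub_eq_add_neg]

lemma eta_zero : A.eta (0 : V) = 0 := by
  have h := A.eta_smul 0 0
  simpa using h

lemma eta_neg (X : V) : A.eta (-X) = -(A.eta X) := by
  have h := A.eta_smul (-1) X
  simpa using h

lemma eta_sub (X Y : V) : A.eta (X - Y) = A.eta X - A.eta Y := by
  rw [sub_eq_add_neg, A.eta_add, A.eta_neg, sub_eq_add_neg]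

lemma eta_eq_g (X : V) : A.eta X = A.g X A.xi := by
  have h := A.g_phi_phi X A.xi
  rw [A.phi_xi, A.g_zeroY, A.eta_xi, mul_one] at h
  linear_combination h

lemma nabla_zeroY (X : V) : A.nabla X (0 : V) = 0 := by
  have h := A.nabla_leibniz X 0 0
  simpa [A.D_zero'] using h

lemma nabla_negY (X Y : V) : A.nabla X (-Y) = -(A.nabla X Y) := by
  have h := A.nabla_addY X Y (-Y)
  rw [add_neg_cancel, A.nabla_zeroY] at h
  exact (eq_neg_of_add_eq_zero_right h.symm)

lemma nabla_subY (X Y Z : V) : A.nabla X (Y - Z) = A.nabla X Y - A.nabla X Z := by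
  rw [sub_eq_add_neg, A.nabla_addY, A.nabla_negY, sub_eq_add_neg]

lemma g_xi_xi : A.g A.xi A.xi = 1 := by
  rw [← A.eta_eq_g, A.eta_xi]

lemma g_nablaxi_xi (X : V) : A.g (A.nabla X A.xi) A.xi = 0 := by
  have h := A.nabla_metric X A.xi A.xi
  rw [A.g_xi_xi, A.D_one', A.g_symm A.xi] at h
  have h2 : (2 : F) * A.g (A.nabla X A.xi) A.xi = 0 := by linear_combination -h
  calc A.g (A.nabla X A.xi) A.xi
      = (hlf : F) * ((2:F) * A.g (A.nabla X A.xi) A.xi) := by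
        rw [← mul_assoc, hlf_mul_two, one_mul]
    _ = 0 := by rw [h2, mul_zero]

lemma eta_nabla_xi (X : V) : A.eta (A.nabla X A.xi) = 0 := by
  rw [A.eta_eq_g, A.g_nablaxi_xi]

lemma D_eta (X Y : V) :
    A.D X (A.eta Y) = A.eta (A.nabla X Y) + A.g Y (A.nabla X A.xi) := by
  rw [A.eta_eq_g Y, A.nabla_metric, ← A.eta_eq_g]

lemma phi_skew (X Y : V) : A.g X (A.phi Y) = -(A.g (A.phi X) Y) := by
  have h := A.g_phi_phi X (A.phi Y)
  rw [A.eta_phi, mul_zero, sub_zero, A.phi_phi] at h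
  rw [A.g_addY, A.g_negY, A.g_smulY, ← A.eta_eq_g, A.eta_phi, mul_zero, add_zero] at h
  linear_combination -h

lemma covPhi_addY (X Y Z : V) :
    A.covPhi X (Y + Z) = A.covPhi X Y + A.covPhi X Z := by
  rw [covPhi, covPhi, covPhi, A.phi_add, A.nabla_addY, A.nabla_addY, A.phi_add]
  abel

lemma covPhi_smulY (X : V) (f : F) (Y : V) :
    A.covPhi X (f • Y) = f • A.covPhi X Y := by
  rw [covPhi, covPhi, A.phi_smul, A.nabla_leibniz, A.nabla_leibniz, A.phi_add,
    A.phi_smul, A.phi_smul, smul_sub]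
  abel

lemma covPhi_negY (X Y : V) : A.covPhi X (-Y) = -(A.covPhi X Y) := by
  rw [covPhi, covPhi, A.phi_neg, A.nabla_negY, A.nabla_negY, A.phi_neg]
  abel

lemma covPhi_zeroY (X : V) : A.covPhi X (0 : V) = 0 := by
  rw [covPhi, A.phi_zero, A.nabla_zeroY, A.phi_zero, sub_zero]

lemma covPhi_addX (X Y Z : V) :
    A.covPhi (X + Y) Z = A.covPhi X Z + A.covPhi Y Z := by
  rw [covPhi, covPhi, covPhi, A.nabla_addX, A.nabla_addX, A.phi_add]
  abel

lemma covPhi_smulX (f : F) (X Y : V) :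
    A.covPhi (f • X) Y = f • A.covPhi X Y := by
  rw [covPhi, covPhi, A.nabla_smulX, A.nabla_smulX, A.phi_smul, smul_sub]

lemma covPhi_xi (X : V) : A.covPhi X A.xi = -(A.phi (A.nabla X A.xi)) := by
  rw [covPhi, A.phi_xi, A.nabla_zeroY, zero_sub]

lemma nabla_phi (X Y : V) :
    A.nabla X (A.phi Y) = A.covPhi X Y + A.phi (A.nabla X Y) := by
  rw [covPhi]; abel

lemma psi_skew (X Y Z : V) :
    A.g (A.covPhi X Y) Z = -(A.g Y (A.covPhi X Z)) := by
  have h1 := A.nabla_metric X (A.phi Y) Z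
  have h2 := A.nabla_metric X Y (A.phi Z)
  have h3 : A.g (A.phi Y) Z = -(A.g Y (A.phi Z)) := by
    rw [A.g_symm, A.phi_skew, A.g_symm]
  have h4 : A.D X (A.g (A.phi Y) Z) = -(A.D X (A.g Y (A.phi Z))) := by
    rw [h3, A.D_neg']
  have h5 : A.g (A.phi (A.nabla X Y)) Z = -(A.g (A.nabla X Y) (A.phi Z)) := by
    rw [A.phi_skew]; ring
  have h6 : A.g (A.phi Y) (A.nabla X Z) = -(A.g Y (A.phi (A.nabla X Z))) := by
    rw [A.g_symm, A.phi_skew, A.g_symm]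
  rw [covPhi, covPhi, A.g_subX, A.g_subY]
  linear_combination -h1 - h2 + h4 - h5 - h6

lemma eta_covPhi (X Y : V) :
    A.eta (A.covPhi X Y) = -(A.g (A.phi Y) (A.nabla X A.xi)) := by
  rw [A.eta_eq_g, A.psi_skew, A.covPhi_xi, A.g_negY, neg_neg, A.phi_skew]

lemma eta_covPhi_phi (X Y : V) :
    A.eta (A.covPhi X (A.phi Y)) = A.g Y (A.nabla X A.xi) := by
  rw [A.eta_eq_g, A.psi_skew, A.covPhi_xi, A.g_negY, neg_neg, A.g_phi_phi,
    A.eta_nabla_xi, mul_zero, sub_zero]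

lemma star_id (X Y : V) :
    A.covPhi X (A.phi Y) + A.phi (A.covPhi X Y)
      = A.g Y (A.nabla X A.xi) • A.xi + A.eta Y • A.nabla X A.xi := by
  rw [covPhi, covPhi, A.phi_sub, A.phi_phi Y, A.phi_phi (A.nabla X Y),
    A.nabla_addY, A.nabla_negY, A.nabla_leibniz, A.D_eta, add_smul]
  abel

lemma phi_covPhi_phi (X Y : V) :
    A.phi (A.covPhi X (A.phi Y)) = A.covPhi X Y
      + A.g (A.phi Y) (A.nabla X A.xi) • A.xi
      + A.eta Y • A.phi (A.nabla X A.xi) := by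
  have h := congrArg A.phi (A.star_id X Y)
  rw [A.phi_add, A.phi_add, A.phi_smul, A.phi_smul, A.phi_xi, smul_zero,
    A.phi_phi, A.eta_covPhi, neg_smul] at h
  linear_combination (norm := module) h

lemma g_star (X Y Z : V) :
    A.g (A.covPhi X (A.phi Y)) Z + A.g (A.phi (A.covPhi X Y)) Z
      = A.g Y (A.nabla X A.xi) * A.eta Z + A.eta Y * A.g Z (A.nabla X A.xi) := by
  have h := congrArg (fun v => A.g v Z) (A.star_id X Y)
  simp only [A.g_addX, A.g_smulX] at h
  rw [h, A.g_symm A.xi Z, ← A.eta_eq_g, A.g_symm (A.nabla X A.xi) Z]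

lemma g_psi_phi (X Y Z : V) :
    A.g Y (A.covPhi X (A.phi Z)) = A.g (A.phi (A.covPhi X Y)) Z := by
  have h1 := A.psi_skew X Y (A.phi Z)
  have h2 := A.phi_skew (A.covPhi X Y) Z
  linear_combination h1 - h2

/-- The canonical adapted connection. -/
noncomputable def goodD (X Y : V) : V :=
  A.nabla X Y + (hlf : F) • A.covPhi X (A.phi Y)
    + (hlf : F) • (A.g Y (A.nabla X A.xi) • A.xi)
    - A.eta Y • A.nabla X A.xi

lemma goodD_parallelization : A.IsParallelization A.goodD := by
  constructor
  · refine ⟨?_, ?_, ?_, ?_⟩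
    · intro X Y Z
      simp only [goodD, A.nabla_addX, A.covPhi_addX, A.g_addY]
      module
    · intro f X Y
      simp only [goodD, A.nabla_smulX, A.covPhi_smulX, A.g_smulY]
      module
    · intro X Y Z
      simp only [goodD, A.nabla_addY, A.phi_add, A.covPhi_addY, A.g_addX, A.eta_add]
      module
    · intro X f Y
      simp only [goodD, A.nabla_leibniz, A.phi_smul, A.covPhi_smulY, A.g_smulX,
        A.eta_smul]
      module
  refine ⟨?_, ?_, ?_, ?_⟩
  · intro X Y
    simp only [goodD]
    rw [A.eta_phi, zero_smul, sub_zero, A.phi_phi Y, A.covPhi_addY,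
      A.covPhi_negY, A.covPhi_smulY, A.covPhi_xi]
    rw [A.phi_sub, A.phi_add, A.phi_add, A.phi_smul, A.phi_smul, A.phi_smul,
      A.phi_smul, A.phi_xi, smul_zero, smul_zero]
    rw [A.phi_covPhi_phi, A.nabla_phi]
    have hh := hlf_add (F := F)
    match_scalars <;>
      first
        | ring1
        | linear_combination hh
        | linear_combination -hh
        | linear_combination A.eta Y * hh
        | linear_combination -(A.eta Y) * hh
  · intro X
    simp only [goodD]
    rw [A.phi_xi, A.covPhi_zeroY, smul_zero, A.g_symm A.xi, A.g_nablaxi_xi,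
      zero_smul, smul_zero, A.eta_xi, one_smul]
    abel
  · intro X Y
    simp only [goodD]
    rw [A.eta_sub, A.eta_add, A.eta_add, A.eta_smul, A.eta_smul, A.eta_smul,
      A.eta_covPhi_phi, A.eta_smul, A.eta_xi, A.eta_nabla_xi, mul_one, mul_zero]
    linear_combination A.D_eta X Y - A.g Y (A.nabla X A.xi) * (hlf_add (F := F))
  · intro X Y Z
    simp only [goodD, A.g_subX, A.g_subY, A.g_addX, A.g_addY, A.g_smulX, A.g_smulY]
    rw [A.g_symm A.xi Z, ← A.eta_eq_g Z, ← A.eta_eq_g Y, A.g_symm (A.nabla X A.xi) Z]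
    linear_combination A.nabla_metric X Y Z - (hlf : F) * A.g_star X Y Z
      - (hlf : F) * A.g_psi_phi X Y Z
      - (A.g Y (A.nabla X A.xi) * A.eta Z + A.eta Y * A.g Z (A.nabla X A.xi))
        * (hlf_add (F := F))

lemma diff_admissible (D1 D2 : V → V → V) (h1 : A.IsParallelization D1)
    (h2 : A.IsParallelization D2) :
    A.IsAdmissibleTensor (fun X Y => D2 X Y - D1 X Y) := by
  obtain ⟨⟨c1a, c1s, c1aY, c1l⟩, hphi1, hxi1, heta1, hg1⟩ := h1
  obtain ⟨⟨c2a, c2s, c2aY, c2l⟩, hphi2, hxi2, heta2, hg2⟩ := h2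
  refine ⟨?_, ?_, ?_, ?_, ?_, ?_, ?_⟩
  · intro X Y Z; simp only [c1a, c2a]; abel
  · intro f X Y; simp only [c1s, c2s, smul_sub]
  · intro X Y Z; simp only [c1aY, c2aY]; abel
  · intro X f Y; simp only [c1l, c2l, smul_sub]; abel
  · intro X Y; simp only [hphi1, hphi2, A.phi_sub]
  · intro X; simp only [hxi1, hxi2, sub_self]
  · intro X Y Z
    simp only [A.g_subX, A.g_subY]
    linear_combination hg1 X Y Z - hg2 X Y Z

lemma add_admissible (D1 T : V → V → V) (h1 : A.IsParallelization D1)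
    (hT : A.IsAdmissibleTensor T) :
    A.IsParallelization (fun X Y => D1 X Y + T X Y) := by
  obtain ⟨⟨c1a, c1s, c1aY, c1l⟩, hphi1, hxi1, heta1, hg1⟩ := h1
  obtain ⟨ta, ts, taY, tl, tphi, txi, tg⟩ := hT
  have etaT : ∀ X Y : V, A.eta (T X Y) = 0 := by
    intro X Y
    have h := tg X Y A.xi
    rw [txi, A.g_zeroY, add_zero] at h
    rw [A.eta_eq_g, h]
  constructor
  · refine ⟨?_, ?_, ?_, ?_⟩
    · intro X Y Z; simp only [c1a, ta]; abel
    · intro f X Y; simp only [c1s, ts, smul_add]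
    · intro X Y Z; simp only [c1aY, taY]; abel
    · intro X f Y; simp only [c1l, tl, smul_add]; abel
  refine ⟨?_, ?_, ?_, ?_⟩
  · intro X Y; simp only [hphi1, tphi, A.phi_add]
  · intro X; simp only [hxi1, txi, add_zero]
  · intro X Y; simp only [A.eta_add, etaT, add_zero]; exact heta1 X Y
  · intro X Y Z
    simp only [A.g_addX, A.g_addY]
    linear_combination hg1 X Y Z - tg X Y Z

end ACMS

end Aux

/-- Let `M` be an `η`-normal almost contact metric manifold with
autoparallel Reeb vector field. The set of parallelizations on `M` is nonempty
and is an affine space modeled on the vector space of `(1,2)`-tensor fields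
`T` with `T_X(φY) = φ(T_X Y)`, `T_X ξ = 0` and `g(T_X Y, Z) + g(Y, T_X Z) = 0`:
the difference of two parallelizations is such a tensor field, and adding such
a tensor field to a parallelization yields a parallelization. -/
theorem parallelizations_affine_space
    {F V : Type*} [CommRing F] [PartialOrder F] [Algebra ℝ F]
    [LieRing V] [Module F V] [Module ℝ V] [IsScalarTower ℝ F V]
    (A : ACMS F V) (hN : A.EtaNormal) (hauto : A.nabla A.xi A.xi = 0) :
    (∃ Dc : V → V → V, A.IsParallelization Dc) ∧
    (∀ D1 D2 : V → V → V, A.IsParallelization D1 → A.IsParallelization D2 →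
      A.IsAdmissibleTensor (fun X Y => D2 X Y - D1 X Y)) ∧
    (∀ (D1 : V → V → V) (T : V → V → V),
      A.IsParallelization D1 → A.IsAdmissibleTensor T →
      A.IsParallelization (fun X Y => D1 X Y + T X Y)) := by
  exact ⟨⟨A.goodD, A.goodD_parallelization⟩,
    fun D1 D2 h1 h2 => A.diff_admissible D1 D2 h1 h2,
    fun D1 T h1 hT => A.add_admissible D1 T h1 hT⟩
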